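/- arXiv:2503.10119 — 4 statements merged into one kernel-verified Lean document; each statement's English description precedes it below -/
import Mathlib

section
/- Let s > 0, Q > 0, R' > 0, C₀ > 0, T₀ ≥ 1. Let σ ∈ L²(ℝ³) with ∫_{ℝ³} (1+|ξ|²)^s |σ̂(ξ)|² dξ ≤ Q², and suppose that for some ε ∈ (0,1), for every ξ ∈ ℝ³ and every t ≥ T₀ one has |σ̂(ξ)| ≤ C₀( e^{2(t+|ξ|)R'} (1 + |ξ|/t) ε + (1+|ξ|⁴)/t² ). Then there exist constants C > 0 and ε₀ ∈ (0,1), depending only on s, Q, R', C₀, T₀, such that if ε ∈ (0, ε₀) then ‖σ‖_{L²(ℝ³)} ≤ C (−log ε)^{−4s/(11+2s)}. -/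
/-!
Write `β = -log ε` and split frequency space at the radius `ρ = β ^ (4 / (11 + 2s))`. Inside the
ball, the pointwise bound taken at the time `t = β / (8R') ≥ ρ` gives
`|σ̂| ≲ e^{-β/2} + ρ⁴/β²`, so the ball contributes `≲ (e^{-β} + ρ⁸/β⁴) ρ³` to `∫ |σ̂|²`; outside,
the Sobolev bound contributes `≤ ρ^{-2s} Q²`. The radius is chosen so that `ρ¹¹/β⁴ = ρ^{-2s}`,
and `e^{-β} ρ³ ≤ ρ^{-2s}` for large `β`; Plancherel turns `∫ |σ̂|² ≲ ρ^{-2s}` into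
`‖σ‖_{L²} ≲ ρ^{-s} = β^{-4s/(11+2s)}`.
-/

open MeasureTheory

noncomputable section

abbrev E3 := EuclideanSpace ℝ (Fin 3)

open Metric Real Filter

theorem integral_norm_sq_le_of_le_on_closedBall {E F : Type*} [NormedAddCommGroup E]
    [MeasurableSpace E] [OpensMeasurableSpace E] [ProperSpace E] [NormedAddCommGroup F]
    {μ : Measure E} [IsFiniteMeasureOnCompacts μ] {f : E → F} {s ρ M : ℝ}
    (hs : 0 ≤ s) (hρ : 0 < ρ) (hf : AEStronglyMeasurable f μ)
    (hint : Integrable (fun ξ ↦ (1 + ‖ξ‖ ^ 2) ^ s * ‖f ξ‖ ^ 2) μ)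
    (hM : ∀ ξ ∈ closedBall (0 : E) ρ, ‖f ξ‖ ≤ M) :
    ∫ ξ, ‖f ξ‖ ^ 2 ∂μ ≤ M ^ 2 * μ.real (closedBall 0 ρ)
      + ρ ^ (-2 * s) * ∫ ξ, (1 + ‖ξ‖ ^ 2) ^ s * ‖f ξ‖ ^ 2 ∂μ := by
  have hweight : ∀ ξ : E, 1 ≤ (1 + ‖ξ‖ ^ 2) ^ s := fun ξ ↦
    one_le_rpow (by nlinarith [sq_nonneg ‖ξ‖]) hs
  have hf2 : Integrable (fun ξ ↦ ‖f ξ‖ ^ 2) μ := by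
    refine hint.mono' (hf.norm.pow 2) (Eventually.of_forall fun ξ ↦ ?_)
    rw [norm_of_nonneg (by positivity)]
    exact le_mul_of_one_le_left (by positivity) (hweight ξ)
  have hlow : ∫ ξ in closedBall 0 ρ, ‖f ξ‖ ^ 2 ∂μ ≤ M ^ 2 * μ.real (closedBall 0 ρ) := by
    calc ∫ ξ in closedBall 0 ρ, ‖f ξ‖ ^ 2 ∂μ ≤ ∫ _ in closedBall 0 ρ, M ^ 2 ∂μ :=
          setIntegral_mono_on hf2.integrableOn
            (integrableOn_const (isCompact_closedBall 0 ρ).measure_lt_top.ne)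
            measurableSet_closedBall fun ξ hξ ↦ pow_le_pow_left₀ (norm_nonneg _) (hM ξ hξ) 2
      _ = M ^ 2 * μ.real (closedBall 0 ρ) := by rw [setIntegral_const, smul_eq_mul, mul_comm]
  have hhigh : ∫ ξ in (closedBall 0 ρ)ᶜ, ‖f ξ‖ ^ 2 ∂μ
      ≤ ρ ^ (-2 * s) * ∫ ξ, (1 + ‖ξ‖ ^ 2) ^ s * ‖f ξ‖ ^ 2 ∂μ := by
    have hpt : ∀ ξ ∈ (closedBall (0 : E) ρ)ᶜ,
        ‖f ξ‖ ^ 2 ≤ ρ ^ (-2 * s) * ((1 + ‖ξ‖ ^ 2) ^ s * ‖f ξ‖ ^ 2) := by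
      intro ξ hξ
      have hρξ : ρ < ‖ξ‖ := by simpa using hξ
      have : ρ ^ (2 * s) ≤ (1 + ‖ξ‖ ^ 2) ^ s := by
        rw [rpow_mul hρ.le, rpow_two]
        exact rpow_le_rpow (by positivity) (by nlinarith) hs
      rw [← mul_assoc]
      refine le_mul_of_one_le_left (sq_nonneg _) ?_
      calc (1 : ℝ) = ρ ^ (-2 * s) * ρ ^ (2 * s) := by rw [← rpow_add hρ]; simp
        _ ≤ ρ ^ (-2 * s) * (1 + ‖ξ‖ ^ 2) ^ s := by gcongr
    calc ∫ ξ in (closedBall 0 ρ)ᶜ, ‖f ξ‖ ^ 2 ∂μ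
        ≤ ∫ ξ in (closedBall 0 ρ)ᶜ, ρ ^ (-2 * s) * ((1 + ‖ξ‖ ^ 2) ^ s * ‖f ξ‖ ^ 2) ∂μ :=
          setIntegral_mono_on hf2.integrableOn (hint.integrableOn.const_mul _)
            measurableSet_closedBall.compl hpt
      _ = ρ ^ (-2 * s) * ∫ ξ in (closedBall 0 ρ)ᶜ, (1 + ‖ξ‖ ^ 2) ^ s * ‖f ξ‖ ^ 2 ∂μ :=
          integral_const_mul _ _
      _ ≤ ρ ^ (-2 * s) * ∫ ξ, (1 + ‖ξ‖ ^ 2) ^ s * ‖f ξ‖ ^ 2 ∂μ := by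
          refine mul_le_mul_of_nonneg_left ?_ (rpow_nonneg hρ.le _)
          exact setIntegral_le_integral hint (Eventually.of_forall fun ξ ↦ by positivity)
  rw [← integral_add_compl measurableSet_closedBall hf2]
  exact add_le_add hlow hhigh

lemma pow_four_le_exp {x : ℝ} (hx : 120 ≤ x) : x ^ 4 ≤ exp x := by
  have h := pow_div_factorial_le_exp (x := x) (by linarith) 5
  norm_num [Nat.factorial] at h
  nlinarith [pow_nonneg (by linarith : (0 : ℝ) ≤ x) 4]

def fourierMajorant (R' ε t r : ℝ) : ℝ :=
  exp (2 * (t + r) * R') * (1 + r / t) * ε + (1 + r ^ 4) / t ^ 2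

lemma fourierMajorant_le {R' β ρ r : ℝ} (hR' : 0 < R') (hβ : 0 < β) (hr : 0 ≤ r) (hrρ : r ≤ ρ)
    (hρ : 1 ≤ ρ) (hρt : ρ ≤ β / (8 * R')) :
    fourierMajorant R' (exp (-β)) (β / (8 * R')) r
      ≤ 2 * exp (-(β / 2)) + 128 * R' ^ 2 * ρ ^ 4 / β ^ 2 := by
  set t := β / (8 * R') with ht
  have htpos : 0 < t := by positivity
  have hrt : r ≤ t := hrρ.trans hρt
  have hexp : exp (2 * (t + r) * R') * exp (-β) ≤ exp (-(β / 2)) := by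
    rw [← exp_add, exp_le_exp]
    have : 8 * t * R' = β := by rw [ht]; field_simp
    nlinarith
  have hfrac : 1 + r / t ≤ 2 := by linarith [(div_le_one htpos).2 hrt]
  have hpoly : (1 + r ^ 4) / t ^ 2 ≤ 128 * R' ^ 2 * ρ ^ 4 / β ^ 2 := by
    have : 1 + r ^ 4 ≤ 2 * ρ ^ 4 := by
      nlinarith [one_le_pow₀ (n := 4) hρ, pow_le_pow_left₀ hr hrρ 4]
    calc (1 + r ^ 4) / t ^ 2 ≤ 2 * ρ ^ 4 / t ^ 2 := by gcongr
      _ = 128 * R' ^ 2 * ρ ^ 4 / β ^ 2 := by rw [ht]; field_simp; ring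
  calc fourierMajorant R' (exp (-β)) t r
      = exp (2 * (t + r) * R') * exp (-β) * (1 + r / t) + (1 + r ^ 4) / t ^ 2 := by
        rw [fourierMajorant]; ring
    _ ≤ exp (-(β / 2)) * 2 + 128 * R' ^ 2 * ρ ^ 4 / β ^ 2 := by gcongr
    _ = 2 * exp (-(β / 2)) + 128 * R' ^ 2 * ρ ^ 4 / β ^ 2 := by ring

lemma sq_add_mul_pow_three_le_rpow_neg {s β ρ R' : ℝ} (hβ : 120 ≤ β) (hρ : 1 ≤ ρ)
    (hρβ : ρ ^ (11 + 2 * s) = β ^ 4) :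
    (2 * exp (-(β / 2)) + 128 * R' ^ 2 * ρ ^ 4 / β ^ 2) ^ 2 * ρ ^ 3
      ≤ 8 * (1 + 4096 * R' ^ 4) * ρ ^ (-2 * s) := by
  have hρ0 : 0 < ρ := by linarith
  have hβ0 : 0 < β := by linarith
  have hexp : exp (-β) * ρ ^ 3 ≤ ρ ^ (-2 * s) := by
    have : ρ ^ 3 * ρ ^ (2 * s) ≤ exp β := by
      calc ρ ^ 3 * ρ ^ (2 * s) = ρ ^ (3 + 2 * s) := by
            rw [rpow_add hρ0]; norm_num
        _ ≤ ρ ^ (11 + 2 * s) := rpow_le_rpow_of_exponent_le hρ (by linarith)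
        _ = β ^ 4 := hρβ
        _ ≤ exp β := pow_four_le_exp hβ
    rw [neg_mul, rpow_neg hρ0.le, exp_neg, inv_mul_eq_div, div_le_iff₀ (exp_pos β),
      inv_mul_eq_div, le_div_iff₀ (by positivity)]
    linarith
  have hpoly : ρ ^ 8 / β ^ 4 * ρ ^ 3 = ρ ^ (-2 * s) := by
    rw [← hρβ, rpow_add hρ0, neg_mul, rpow_neg hρ0.le]
    norm_num
    field_simp
  have hsq : exp (-(β / 2)) ^ 2 = exp (-β) := by rw [← exp_nat_mul]; ring_nf
  calc (2 * exp (-(β / 2)) + 128 * R' ^ 2 * ρ ^ 4 / β ^ 2) ^ 2 * ρ ^ 3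
      ≤ (8 * exp (-(β / 2)) ^ 2 + 2 * (128 * R' ^ 2 * ρ ^ 4 / β ^ 2) ^ 2) * ρ ^ 3 := by
        gcongr
        nlinarith [sq_nonneg (2 * exp (-(β / 2)) - 128 * R' ^ 2 * ρ ^ 4 / β ^ 2)]
    _ = 8 * (exp (-β) * ρ ^ 3) + 32768 * R' ^ 4 * (ρ ^ 8 / β ^ 4 * ρ ^ 3) := by
        rw [hsq]; ring
    _ ≤ 8 * (1 + 4096 * R' ^ 4) * ρ ^ (-2 * s) := by
        rw [hpoly]; nlinarith

lemma eventually_admissible_scale {s R' T₀ : ℝ} (hs : 0 ≤ s) (hR' : 0 < R') :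
    ∀ᶠ β in atTop, 120 ≤ β ∧ T₀ ≤ β / (8 * R') ∧ β ^ (4 / (11 + 2 * s)) ≤ β / (8 * R') := by
  have hθ : 4 / (11 + 2 * s) < 1 := by rw [div_lt_one (by positivity)]; linarith
  filter_upwards [eventually_ge_atTop 120, eventually_ge_atTop (8 * R' * T₀),
    (tendsto_rpow_atTop (sub_pos.2 hθ)).eventually_ge_atTop (8 * R')] with β h120 hT₀ hR'β
  have hβ0 : 0 < β := by linarith
  refine ⟨h120, by rw [le_div_iff₀ (by positivity)]; linarith, ?_⟩
  rw [le_div_iff₀ (by positivity)]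
  calc β ^ (4 / (11 + 2 * s)) * (8 * R')
      ≤ β ^ (4 / (11 + 2 * s)) * β ^ (1 - 4 / (11 + 2 * s)) := by gcongr
    _ = β := by rw [← rpow_add hβ0]; simp

theorem integral_norm_sq_le_of_le_fourierMajorant {s Q R' C₀ β : ℝ} {f : E3 → ℂ} (hs : 0 ≤ s)
    (hR' : 0 < R') (hC₀ : 0 ≤ C₀) (hβ : 120 ≤ β) (hscale : β ^ (4 / (11 + 2 * s)) ≤ β / (8 * R'))
    (hf : AEStronglyMeasurable f)
    (hint : Integrable fun ξ : E3 ↦ (1 + ‖ξ‖ ^ 2) ^ s * ‖f ξ‖ ^ 2)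
    (hsob : ∫ ξ : E3, (1 + ‖ξ‖ ^ 2) ^ s * ‖f ξ‖ ^ 2 ≤ Q ^ 2)
    (hpt : ∀ ξ : E3, ‖f ξ‖ ≤ C₀ * fourierMajorant R' (exp (-β)) (β / (8 * R')) ‖ξ‖) :
    ∫ ξ : E3, ‖f ξ‖ ^ 2
      ≤ (8 * C₀ ^ 2 * volume.real (closedBall (0 : E3) 1) * (1 + 4096 * R' ^ 4) + Q ^ 2)
        * (β ^ (-(4 * s / (11 + 2 * s)))) ^ 2 := by
  have hβ0 : 0 < β := by linarith
  set ρ := β ^ (4 / (11 + 2 * s)) with hρ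
  have hρ1 : 1 ≤ ρ := one_le_rpow (by linarith) (by positivity)
  have hρβ : ρ ^ (11 + 2 * s) = β ^ 4 := by
    rw [hρ, ← rpow_mul hβ0.le, div_mul_cancel₀ _ (by positivity)]; norm_num
  have hrate : ρ ^ (-2 * s) = (β ^ (-(4 * s / (11 + 2 * s)))) ^ 2 := by
    rw [hρ, ← rpow_mul hβ0.le, ← rpow_natCast, ← rpow_mul hβ0.le]; ring_nf
  have hball : ∀ ξ ∈ closedBall (0 : E3) ρ,
      ‖f ξ‖ ≤ C₀ * (2 * exp (-(β / 2)) + 128 * R' ^ 2 * ρ ^ 4 / β ^ 2) := fun ξ hξ ↦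
    (hpt ξ).trans <| mul_le_mul_of_nonneg_left
      (fourierMajorant_le hR' hβ0 (norm_nonneg ξ) (by simpa using hξ) hρ1 hscale) hC₀
  have hsplit := integral_norm_sq_le_of_le_on_closedBall hs (by linarith) hf hint hball
  rw [Measure.addHaar_real_closedBall' _ _ (by linarith), finrank_euclideanSpace_fin] at hsplit
  calc ∫ ξ : E3, ‖f ξ‖ ^ 2
      ≤ (C₀ * (2 * exp (-(β / 2)) + 128 * R' ^ 2 * ρ ^ 4 / β ^ 2)) ^ 2
          * (ρ ^ 3 * volume.real (closedBall (0 : E3) 1)) + ρ ^ (-2 * s) * Q ^ 2 :=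
        hsplit.trans (by gcongr)
    _ = C₀ ^ 2 * volume.real (closedBall (0 : E3) 1)
          * ((2 * exp (-(β / 2)) + 128 * R' ^ 2 * ρ ^ 4 / β ^ 2) ^ 2 * ρ ^ 3)
        + ρ ^ (-2 * s) * Q ^ 2 := by ring
    _ ≤ C₀ ^ 2 * volume.real (closedBall (0 : E3) 1) * (8 * (1 + 4096 * R' ^ 4) * ρ ^ (-2 * s))
        + ρ ^ (-2 * s) * Q ^ 2 := by
        gcongr C₀ ^ 2 * _ * ?_ + _
        exact sq_add_mul_pow_three_le_rpow_neg hβ hρ1 hρβ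
    _ = _ := by rw [hrate]; ring

theorem stmt1_general (s Q R' C₀ T₀ : ℝ) (hs : 0 < s) (hR' : 0 < R')
    (hC₀ : 0 < C₀) :
    ∃ C ε₀ : ℝ, 0 < C ∧ ε₀ ∈ Set.Ioo (0 : ℝ) 1 ∧
      ∀ (σ : E3 → ℝ) (σhat : E3 → ℂ) (ε : ℝ),
        -- σ ∈ L²(ℝ³)
        MemLp σ 2 (volume : Measure E3) →
        Measurable σhat →
        -- σ̂ is the L² Fourier transform of σ: Plancherel identity
        (∫ ξ : E3, ‖σhat ξ‖ ^ 2) = (2 * Real.pi) ^ 3 * ∫ x : E3, (σ x) ^ 2 →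
        -- Sobolev bound  ∫ (1+|ξ|²)^s |σ̂|² ≤ Q²
        Integrable (fun ξ : E3 => (1 + ‖ξ‖ ^ 2) ^ s * ‖σhat ξ‖ ^ 2)
          (volume : Measure E3) →
        (∫ ξ : E3, (1 + ‖ξ‖ ^ 2) ^ s * ‖σhat ξ‖ ^ 2) ≤ Q ^ 2 →
        ε ∈ Set.Ioo (0 : ℝ) ε₀ →
        -- the pointwise bound on σ̂
        (∀ ξ : E3, ∀ t : ℝ, T₀ ≤ t →
          ‖σhat ξ‖ ≤ C₀ * (Real.exp (2 * (t + ‖ξ‖) * R') * (1 + ‖ξ‖ / t) * ε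
            + (1 + ‖ξ‖ ^ 4) / t ^ 2)) →
        Real.sqrt (∫ x : E3, (σ x) ^ 2)
          ≤ C * (-Real.log ε) ^ (-(4 * s / (11 + 2 * s))) := by
  obtain ⟨β₀, hβ₀⟩ := (eventually_admissible_scale (T₀ := T₀) hs.le hR').exists_forall_of_atTop
  set K := 8 * C₀ ^ 2 * volume.real (closedBall (0 : E3) 1) * (1 + 4096 * R' ^ 4) + Q ^ 2
  have hK : 0 < K := by
    have : 0 < volume.real (closedBall (0 : E3) 1) :=
      ENNReal.toReal_pos (measure_closedBall_pos _ _ one_pos).ne' measure_closedBall_lt_top.ne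
    positivity
  refine ⟨sqrt (K / (2 * π) ^ 3), exp (-β₀), by positivity,
    ⟨exp_pos _, exp_lt_one_iff.2 (by linarith [(hβ₀ β₀ le_rfl).1])⟩, ?_⟩
  rintro σ σhat ε - hmeas hplanch hint hsob ⟨hε, hεβ₀⟩ hpt
  have hβ : β₀ ≤ -log ε := by
    rw [le_neg, ← log_exp (-β₀)]; exact (log_lt_log hε hεβ₀).le
  obtain ⟨h120, hT₀, hscale⟩ := hβ₀ _ hβ
  have hfourier := integral_norm_sq_le_of_le_fourierMajorant hs.le hR' hC₀.le h120 hscale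
    hmeas.aestronglyMeasurable hint hsob fun ξ ↦ by
      rw [neg_neg, exp_log hε]; exact hpt ξ _ hT₀
  have hσ : ∫ x : E3, σ x ^ 2 ≤ K / (2 * π) ^ 3 * ((-log ε) ^ (-(4 * s / (11 + 2 * s)))) ^ 2 := by
    rw [div_mul_eq_mul_div, le_div_iff₀ (by positivity)]; linarith
  calc sqrt (∫ x : E3, σ x ^ 2)
      ≤ sqrt (K / (2 * π) ^ 3 * ((-log ε) ^ (-(4 * s / (11 + 2 * s)))) ^ 2) := sqrt_le_sqrt hσ
    _ = _ := by rw [sqrt_mul (by positivity), sqrt_sq (by positivity)]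

theorem stmt1 (s Q R' C₀ T₀ : ℝ) (hs : 0 < s) (hQ : 0 < Q) (hR' : 0 < R')
    (hC₀ : 0 < C₀) (hT₀ : 1 ≤ T₀) :
    ∃ C ε₀ : ℝ, 0 < C ∧ ε₀ ∈ Set.Ioo (0 : ℝ) 1 ∧
      ∀ (σ : E3 → ℝ) (σhat : E3 → ℂ) (ε : ℝ),
        -- σ ∈ L²(ℝ³)
        MemLp σ 2 (volume : Measure E3) →
        Measurable σhat →
        -- σ̂ is the L² Fourier transform of σ: Plancherel identity
        (∫ ξ : E3, ‖σhat ξ‖ ^ 2) = (2 * Real.pi) ^ 3 * ∫ x : E3, (σ x) ^ 2 →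
        -- Sobolev bound  ∫ (1+|ξ|²)^s |σ̂|² ≤ Q²
        Integrable (fun ξ : E3 => (1 + ‖ξ‖ ^ 2) ^ s * ‖σhat ξ‖ ^ 2)
          (volume : Measure E3) →
        (∫ ξ : E3, (1 + ‖ξ‖ ^ 2) ^ s * ‖σhat ξ‖ ^ 2) ≤ Q ^ 2 →
        ε ∈ Set.Ioo (0 : ℝ) ε₀ →
        -- the pointwise bound on σ̂
        (∀ ξ : E3, ∀ t : ℝ, T₀ ≤ t →
          ‖σhat ξ‖ ≤ C₀ * (Real.exp (2 * (t + ‖ξ‖) * R') * (1 + ‖ξ‖ / t) * ε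
            + (1 + ‖ξ‖ ^ 4) / t ^ 2)) →
        Real.sqrt (∫ x : E3, (σ x) ^ 2)
          ≤ C * (-Real.log ε) ^ (-(4 * s / (11 + 2 * s))) :=
  stmt1_general s Q R' C₀ T₀ hs hR' hC₀

end
end

section
/- Let s > 0 and R' > 0. There exist a constant C > 0 and ε₀ ∈ (0,1), depending only on s and R', such that for every ε ∈ (0, ε₀), setting t = (−log ε)/(16R') and ρ = t^{4/(11+2s)}, one has ρ ≥ 1, ρ ≤ t, and ρ³ e^{4(t+ρ)R'} (1+ρ/t)² ε² + ρ³ (1+ρ⁴)²/t⁴ + ρ^{−2s} ≤ C (−log ε)^{−8s/(11+2s)}. -/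
/-!
Write `L = -log ε`, `t = L / (16 R')` and `ρ = t ^ a` with `a = 4 / (11 + 2s)`. Since `ρ ≤ t`,
the exponential factor is at most `e^{8R't}` while `ε² = e^{-32R't}`, so the first term is
`O(t³ e^{-24R't})` and decays faster than any power of `t`. The exponent `a` is the one that
balances the other two terms: `ρ¹¹ / t⁴ = ρ^{-2s} = t^{-β}` with `β = 8s / (11 + 2s) ≤ 4`.
-/

open Real Nat

lemma pow_mul_exp_neg_mul_le {k t : ℝ} (hk : 0 < k) (ht : 0 ≤ t) (n : ℕ) :
    t ^ n * exp (-(k * t)) ≤ n ! / k ^ n := by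
  have h := pow_div_factorial_le_exp (k * t) (mul_nonneg hk.le ht) n
  rw [div_le_iff₀ (by positivity)] at h
  rw [le_div_iff₀ (by positivity), exp_neg]
  calc t ^ n * (exp (k * t))⁻¹ * k ^ n = (k * t) ^ n / exp (k * t) := by ring
    _ ≤ n ! := by rw [div_le_iff₀ (exp_pos _)]; linarith

lemma pow_three_mul_exp_neg_mul_le {k t β : ℝ} (hk : 0 < k) (ht : 1 ≤ t) (hβ : β ≤ 4) :
    t ^ 3 * exp (-(k * t)) ≤ 7 ! / k ^ 7 * t ^ (-β) := by
  have ht0 : 0 < t := by linarith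
  have hpow : t ^ 3 ≤ t ^ 7 * t ^ (-β) := by
    rw [← rpow_natCast, ← rpow_natCast, ← rpow_add ht0]
    exact rpow_le_rpow_of_exponent_le ht (by push_cast; linarith)
  calc t ^ 3 * exp (-(k * t)) ≤ t ^ 7 * exp (-(k * t)) * t ^ (-β) := by
        rw [mul_right_comm]; gcongr
    _ ≤ 7 ! / k ^ 7 * t ^ (-β) := by
        gcongr; exact pow_mul_exp_neg_mul_le hk ht0.le 7

lemma first_term_le {R' t ρ : ℝ} (hR' : 0 < R') (ht : 0 < t) (hρ0 : 0 ≤ ρ) (hρt : ρ ≤ t) :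
    ρ ^ 3 * exp (4 * (t + ρ) * R') * (1 + ρ / t) ^ 2 * exp (-(16 * R' * t)) ^ 2
      ≤ 4 * (t ^ 3 * exp (-(24 * R' * t))) := by
  have hexp : exp (4 * (t + ρ) * R') * exp (-(16 * R' * t)) ^ 2 ≤ exp (-(24 * R' * t)) := by
    rw [← exp_nat_mul, ← exp_add, exp_le_exp]
    push_cast
    nlinarith
  have hfrac : 1 + ρ / t ≤ 2 := by linarith [(div_le_one ht).mpr hρt]
  calc ρ ^ 3 * exp (4 * (t + ρ) * R') * (1 + ρ / t) ^ 2 * exp (-(16 * R' * t)) ^ 2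
      = ρ ^ 3 * (1 + ρ / t) ^ 2 * (exp (4 * (t + ρ) * R') * exp (-(16 * R' * t)) ^ 2) := by ring
    _ ≤ t ^ 3 * 2 ^ 2 * exp (-(24 * R' * t)) := by gcongr
    _ = 4 * (t ^ 3 * exp (-(24 * R' * t))) := by ring

lemma pow_three_mul_one_add_pow_four_sq_le {ρ : ℝ} (hρ : 1 ≤ ρ) :
    ρ ^ 3 * (1 + ρ ^ 4) ^ 2 ≤ 4 * ρ ^ 11 := by
  have h : 1 + ρ ^ 4 ≤ 2 * ρ ^ 4 := by linarith [one_le_pow₀ (n := 4) hρ]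
  calc ρ ^ 3 * (1 + ρ ^ 4) ^ 2 ≤ ρ ^ 3 * (2 * ρ ^ 4) ^ 2 := by gcongr
    _ = 4 * ρ ^ 11 := by ring

lemma second_term_le {t a β : ℝ} (ht : 1 ≤ t) (ha : 0 ≤ a) (h11 : a * 11 - 4 = -β) :
    (t ^ a) ^ 3 * (1 + (t ^ a) ^ 4) ^ 2 / t ^ 4 ≤ 4 * t ^ (-β) := by
  have ht0 : 0 < t := by linarith
  calc (t ^ a) ^ 3 * (1 + (t ^ a) ^ 4) ^ 2 / t ^ 4 ≤ 4 * (t ^ a) ^ 11 / t ^ 4 := by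
        gcongr ?_ / _; exact pow_three_mul_one_add_pow_four_sq_le (one_le_rpow ht ha)
    _ = 4 * t ^ (-β) := by
        rw [mul_div_assoc, ← rpow_mul_natCast ht0.le, ← rpow_natCast t 4, ← rpow_sub ht0]
        norm_num [h11]

lemma three_terms_le {s R' t a β : ℝ} (hR' : 0 < R') (ht : 1 ≤ t) (ha0 : 0 ≤ a) (ha1 : a ≤ 1)
    (hβ4 : β ≤ 4) (h2s : a * (2 * s) = β) (h11 : a * 11 - 4 = -β) :
    (t ^ a) ^ 3 * exp (4 * (t + t ^ a) * R') * (1 + t ^ a / t) ^ 2 * exp (-(16 * R' * t)) ^ 2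
        + (t ^ a) ^ 3 * (1 + (t ^ a) ^ 4) ^ 2 / t ^ 4 + (t ^ a) ^ (-(2 * s))
      ≤ (4 * (7 ! / (24 * R') ^ 7) + 4 + 1) * t ^ (-β) := by
  have ht0 : 0 < t := by linarith
  have h1 := first_term_le hR' ht0 (rpow_nonneg ht0.le a) (rpow_le_self_of_one_le ht ha1)
  have h1' := pow_three_mul_exp_neg_mul_le (k := 24 * R') (by positivity) ht hβ4
  have h3 : (t ^ a) ^ (-(2 * s)) = t ^ (-β) := by rw [← rpow_mul ht0.le, mul_neg, h2s]
  linarith [second_term_le ht ha0 h11]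

theorem stmt3 (s R' : ℝ) (hs : 0 < s) (hR' : 0 < R') :
    ∃ C ε₀ : ℝ, 0 < C ∧ ε₀ ∈ Set.Ioo (0 : ℝ) 1 ∧
      ∀ ε : ℝ, ε ∈ Set.Ioo (0 : ℝ) ε₀ →
        1 ≤ ((-Real.log ε) / (16 * R')) ^ ((4 : ℝ) / (11 + 2 * s)) ∧
        ((-Real.log ε) / (16 * R')) ^ ((4 : ℝ) / (11 + 2 * s))
          ≤ (-Real.log ε) / (16 * R') ∧
        (((-Real.log ε) / (16 * R')) ^ ((4 : ℝ) / (11 + 2 * s))) ^ (3 : ℕ)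
            * Real.exp (4 * ((-Real.log ε) / (16 * R')
                + ((-Real.log ε) / (16 * R')) ^ ((4 : ℝ) / (11 + 2 * s))) * R')
            * (1 + (((-Real.log ε) / (16 * R')) ^ ((4 : ℝ) / (11 + 2 * s)))
                / ((-Real.log ε) / (16 * R'))) ^ (2 : ℕ) * ε ^ (2 : ℕ)
          + (((-Real.log ε) / (16 * R')) ^ ((4 : ℝ) / (11 + 2 * s))) ^ (3 : ℕ)
            * (1 + (((-Real.log ε) / (16 * R')) ^ ((4 : ℝ) / (11 + 2 * s))) ^ (4 : ℕ)) ^ (2 : ℕ)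
            / ((-Real.log ε) / (16 * R')) ^ (4 : ℕ)
          + (((-Real.log ε) / (16 * R')) ^ ((4 : ℝ) / (11 + 2 * s))) ^ (-(2 * s))
          ≤ C * (-Real.log ε) ^ (-(8 * s / (11 + 2 * s))) := by
  have hs11 : (0 : ℝ) < 11 + 2 * s := by linarith
  have hR16 : 0 < 16 * R' := by positivity
  refine ⟨(4 * (7 ! / (24 * R') ^ 7) + 4 + 1) * (16 * R') ^ (8 * s / (11 + 2 * s)),
    exp (-(16 * R' + 1)), by positivity, ⟨exp_pos _, exp_lt_one_iff.mpr (by linarith)⟩, ?_⟩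
  rintro ε ⟨hε0, hεε₀⟩
  set L := -log ε with hL
  have hL_gt : 16 * R' + 1 < L := by
    have := log_lt_log hε0 hεε₀
    rw [log_exp] at this
    linarith
  set t := L / (16 * R') with ht
  have ht1 : 1 ≤ t := by rw [ht, le_div_iff₀ hR16]; linarith
  have hε : ε = exp (-(16 * R' * t)) := by
    rw [ht, mul_div_cancel₀ _ hR16.ne', hL, neg_neg, exp_log hε0]
  refine ⟨one_le_rpow ht1 (by positivity),
    rpow_le_self_of_one_le ht1 (by rw [div_le_one hs11]; linarith), ?_⟩
  rw [hε]
  calc _ ≤ (4 * (7 ! / (24 * R') ^ 7) + 4 + 1) * t ^ (-(8 * s / (11 + 2 * s))) :=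
        three_terms_le hR' ht1 (by positivity) (by rw [div_le_one hs11]; linarith)
          (by rw [div_le_iff₀ hs11]; linarith) (by field_simp; ring) (by field_simp; ring)
    _ = _ := by
        rw [ht, div_rpow (by linarith) hR16.le, rpow_neg hR16.le, div_inv_eq_mul]
        ring
end

section
/- Let k ∈ ℝ and define g : ℝ³ \ {0} → ℂ by g(x) = e^{i k |x|}/(4π |x|). Then g is smooth on ℝ³ \ {0} and satisfies the Helmholtz equation Δg(x) + k² g(x) = 0 for every x ∈ ℝ³ \ {0}, where Δg denotes the Laplacian (the sum of the second partial derivatives) of g. -/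
/-!
STATEMENT 10: The fundamental solution `g(x) = e^{ik|x|}/(4π|x|)` of the
Helmholtz equation is smooth on `ℝ³ \ {0}` and satisfies `Δg + k²g = 0` there,
where `Δ` is the sum of the second partial derivatives.
-/

noncomputable section

/-- Partial derivative in the `i`-th coordinate direction. -/
def pd (i : Fin 3) (u : E3 → ℂ) (x : E3) : ℂ :=
  fderiv ℝ u x (EuclideanSpace.single i 1)

/-- The Laplacian `Δu = Σᵢ ∂²u/∂xᵢ²`. -/
def lap (u : E3 → ℂ) (x : E3) : ℂ := ∑ i, pd i (fun y => pd i u y) x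

/-- The fundamental solution `g(x) = e^{ik|x|}/(4π|x|)`. -/
def gfun (k : ℝ) (x : E3) : ℂ :=
  Complex.exp (Complex.I * (k : ℂ) * (‖x‖ : ℂ)) / (4 * (Real.pi : ℂ) * (‖x‖ : ℂ))

/-! ### Auxiliary one-dimensional functions: `gfun k x = h0 k (‖x‖²)` etc. -/

def h0 (k : ℝ) (s : ℝ) : ℂ :=
  Complex.exp (Complex.I * k * (Real.sqrt s : ℂ)) / (4 * (Real.pi : ℂ) * (Real.sqrt s : ℂ))
def h1 (k : ℝ) (s : ℝ) : ℂ :=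
  Complex.exp (Complex.I * k * (Real.sqrt s : ℂ)) * (Complex.I * k * (Real.sqrt s : ℂ) - 1) /
    (8 * (Real.pi : ℂ) * (Real.sqrt s : ℂ) ^ 3)
def h2 (k : ℝ) (s : ℝ) : ℂ :=
  Complex.exp (Complex.I * k * (Real.sqrt s : ℂ)) *
    ((Complex.I * k) ^ 2 * (Real.sqrt s : ℂ) ^ 2 - 3 * (Complex.I * k) * (Real.sqrt s : ℂ) + 3) /
    (16 * (Real.pi : ℂ) * (Real.sqrt s : ℂ) ^ 5)

lemma sqrt_hasDerivAt {s : ℝ} (hs : 0 < s) :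
    HasDerivAt (fun t : ℝ => ((Real.sqrt t : ℝ) : ℂ)) ((1 / (2 * Real.sqrt s) : ℝ) : ℂ) s :=
  (Real.hasDerivAt_sqrt hs.ne').ofReal_comp

lemma h0_deriv (k : ℝ) {s : ℝ} (hs : 0 < s) : HasDerivAt (h0 k) (h1 k s) s := by
  have hr : Real.sqrt s ≠ 0 := (Real.sqrt_pos.2 hs).ne'
  have hrC : ((Real.sqrt s : ℝ) : ℂ) ≠ 0 := by exact_mod_cast hr
  have hnum : HasDerivAt (fun t : ℝ => Complex.exp (Complex.I * k * (Real.sqrt t : ℂ)))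
      (Complex.exp (Complex.I * k * (Real.sqrt s : ℂ)) *
        (Complex.I * k * ((1 / (2 * Real.sqrt s) : ℝ) : ℂ))) s :=
    ((sqrt_hasDerivAt hs).const_mul (Complex.I * k)).cexp
  have hden : HasDerivAt (fun t : ℝ => 4 * (Real.pi : ℂ) * (Real.sqrt t : ℂ))
      (4 * (Real.pi : ℂ) * ((1 / (2 * Real.sqrt s) : ℝ) : ℂ)) s :=
    (sqrt_hasDerivAt hs).const_mul _
  have := hnum.div hden (by
    simp [Real.pi_ne_zero, hrC, mul_ne_zero])
  refine this.congr_deriv (Eq.symm ?_)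
  rw [h1]
  have hπ : (Real.pi : ℂ) ≠ 0 := by exact_mod_cast Real.pi_ne_zero
  push_cast
  field_simp
  ring

lemma h1_deriv (k : ℝ) {s : ℝ} (hs : 0 < s) : HasDerivAt (h1 k) (h2 k s) s := by
  have hr : Real.sqrt s ≠ 0 := (Real.sqrt_pos.2 hs).ne'
  have hrC : ((Real.sqrt s : ℝ) : ℂ) ≠ 0 := by exact_mod_cast hr
  have hR := sqrt_hasDerivAt hs
  have hnum : HasDerivAt
      (fun t : ℝ => Complex.exp (Complex.I * k * (Real.sqrt t : ℂ)) * (Complex.I * k * (Real.sqrt t : ℂ) - 1))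
      (Complex.exp (Complex.I * k * (Real.sqrt s : ℂ)) * (Complex.I * k * ((1 / (2 * Real.sqrt s) : ℝ) : ℂ)) *
          (Complex.I * k * (Real.sqrt s : ℂ) - 1) +
        Complex.exp (Complex.I * k * (Real.sqrt s : ℂ)) * (Complex.I * k * ((1 / (2 * Real.sqrt s) : ℝ) : ℂ))) s := by
    have e := ((hR.const_mul (Complex.I * k)).cexp).mul ((hR.const_mul (Complex.I * k)).sub_const 1)
    exact e
  have hden : HasDerivAt (fun t : ℝ => 8 * (Real.pi : ℂ) * (Real.sqrt t : ℂ) ^ 3)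
      (8 * (Real.pi : ℂ) * (3 * (Real.sqrt s : ℂ) ^ 2 * ((1 / (2 * Real.sqrt s) : ℝ) : ℂ))) s := by
    have e := ((hR.mul hR).mul hR).const_mul (8 * (Real.pi : ℂ))
    convert e using 1
    · rfl
    · funext y; simp only [Pi.mul_apply]; ring
    · simp only [Pi.mul_apply]; push_cast; ring
  have := hnum.div hden (by simp [Real.pi_ne_zero, hrC, mul_ne_zero, pow_ne_zero])
  have hπ : (Real.pi : ℂ) ≠ 0 := by exact_mod_cast Real.pi_ne_zero
  refine this.congr_deriv (Eq.symm ?_)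
  rw [h2]
  push_cast
  field_simp [hrC, hπ]
  ring

lemma key_alg (k : ℝ) {s : ℝ} (hs : 0 < s) :
    4 * (s : ℂ) * h2 k s + 6 * h1 k s + (k : ℂ) ^ 2 * h0 k s = 0 := by
  have hr : Real.sqrt s ≠ 0 := (Real.sqrt_pos.2 hs).ne'
  have hrC : ((Real.sqrt s : ℝ) : ℂ) ≠ 0 := by exact_mod_cast hr
  have hπ : (Real.pi : ℂ) ≠ 0 := by exact_mod_cast Real.pi_ne_zero
  set R : ℂ := ((Real.sqrt s : ℝ) : ℂ) with hR
  set E : ℂ := Complex.exp (Complex.I * k * R) with hE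
  have hsq : ((s : ℝ) : ℂ) = R ^ 2 := by
    rw [hR]; exact_mod_cast (Real.sq_sqrt hs.le).symm
  have hD : (16 * (Real.pi : ℂ) * R ^ 5) ≠ 0 := by
    exact mul_ne_zero (mul_ne_zero (by norm_num) hπ) (pow_ne_zero _ hrC)
  have hD1 : (8 * (Real.pi : ℂ) * R ^ 3) ≠ 0 := by
    exact mul_ne_zero (mul_ne_zero (by norm_num) hπ) (pow_ne_zero _ hrC)
  have hD0 : (4 * (Real.pi : ℂ) * R) ≠ 0 := by
    exact mul_ne_zero (mul_ne_zero (by norm_num) hπ) hrC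
  have e2 : 4 * (s : ℂ) * h2 k s =
      (E * (4 * R ^ 2 * ((Complex.I * k) ^ 2 * R ^ 2 - 3 * (Complex.I * k) * R + 3))) /
        (16 * (Real.pi : ℂ) * R ^ 5) := by
    rw [h2, hsq, mul_div_assoc', div_eq_div_iff hD hD]; ring
  have e1 : 6 * h1 k s =
      (E * (12 * R ^ 2 * (Complex.I * k * R - 1))) / (16 * (Real.pi : ℂ) * R ^ 5) := by
    rw [h1, mul_div_assoc', div_eq_div_iff hD1 hD]; ring
  have e0 : (k : ℂ) ^ 2 * h0 k s =
      (E * (4 * (k : ℂ) ^ 2 * R ^ 4)) / (16 * (Real.pi : ℂ) * R ^ 5) := by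
    rw [h0, mul_div_assoc', div_eq_div_iff hD0 hD]; ring
  rw [e2, e1, e0, ← add_div, ← add_div, div_eq_zero_iff]
  left
  linear_combination (4 * R ^ 4 * (k : ℂ) ^ 2 * E) * Complex.I_sq

/-! ### Relating `gfun` to `h0` -/

lemma gfun_eq (k : ℝ) : gfun k = fun x : E3 => h0 k (‖x‖ ^ 2) := by
  funext x
  rw [gfun, h0, Real.sqrt_sq_eq_abs, abs_of_nonneg (norm_nonneg x)]

lemma norm_sq_hasFDerivAt (x : E3) :
    HasFDerivAt (fun y : E3 => ‖y‖ ^ 2) (2 • (innerSL ℝ x)) x :=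
  (hasStrictFDerivAt_norm_sq x).hasFDerivAt

lemma norm_sq_pos {x : E3} (hx : x ≠ 0) : 0 < ‖x‖ ^ 2 := by
  have h := norm_pos_iff.mpr hx
  positivity

lemma g_hasFDerivAt (k : ℝ) {x : E3} (hx : x ≠ 0) :
    HasFDerivAt (gfun k)
      ((ContinuousLinearMap.smulRight (1 : ℝ →L[ℝ] ℝ) (h1 k (‖x‖ ^ 2))).comp
        (2 • (innerSL ℝ x))) x := by
  rw [gfun_eq]
  have hs : 0 < ‖x‖ ^ 2 := norm_sq_pos hx
  have hd : HasFDerivAt (h0 k)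
      (ContinuousLinearMap.smulRight (1 : ℝ →L[ℝ] ℝ) (h1 k (‖x‖ ^ 2))) (‖x‖ ^ 2) :=
    hasDerivAt_iff_hasFDerivAt.1 (h0_deriv k hs)
  exact hd.comp x (norm_sq_hasFDerivAt x)

lemma pd_g_eq (k : ℝ) (i : Fin 3) {x : E3} (hx : x ≠ 0) :
    pd i (gfun k) x = h1 k (‖x‖ ^ 2) * (2 * (x i : ℂ)) := by
  rw [pd, (g_hasFDerivAt k hx).fderiv]
  simp [ContinuousLinearMap.smulRight_apply, real_inner_comm,
    EuclideanSpace.inner_single_left, EuclideanSpace.inner_single_right]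
  ring

def Pfun (k : ℝ) (i : Fin 3) (y : E3) : ℂ := h1 k (‖y‖ ^ 2) * (2 * (y i : ℂ))

def Li (i : Fin 3) : E3 →L[ℝ] ℂ :=
  (2 : ℂ) • (Complex.ofRealCLM.comp (EuclideanSpace.proj i))

lemma P_hasFDerivAt (k : ℝ) (i : Fin 3) {x : E3} (hx : x ≠ 0) :
    HasFDerivAt (Pfun k i)
      (h1 k (‖x‖ ^ 2) • (Li i) +
        (2 * (x i : ℂ)) • ((ContinuousLinearMap.smulRight (1 : ℝ →L[ℝ] ℝ) (h2 k (‖x‖ ^ 2))).comp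
          (2 • (innerSL ℝ x)))) x := by
  have hs : 0 < ‖x‖ ^ 2 := norm_sq_pos hx
  have hF1 : HasFDerivAt (fun y : E3 => h1 k (‖y‖ ^ 2))
      ((ContinuousLinearMap.smulRight (1 : ℝ →L[ℝ] ℝ) (h2 k (‖x‖ ^ 2))).comp
        (2 • (innerSL ℝ x))) x :=
    by exact (hasDerivAt_iff_hasFDerivAt.1 (h1_deriv k hs)).comp x (norm_sq_hasFDerivAt x)
  have hF2 : HasFDerivAt (fun y : E3 => (2 : ℂ) * (y i : ℂ)) (Li i) x := by
    have h := (Li i).hasFDerivAt (x := x)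
    have he : (fun y : E3 => (2 : ℂ) * (y i : ℂ)) = fun y => (Li i) y := by
      funext y; simp [Li]
    rw [he]
    exact h
  exact hF1.mul hF2

lemma pd_pd_g (k : ℝ) (i : Fin 3) {x : E3} (hx : x ≠ 0) :
    pd i (fun y => pd i (gfun k) y) x =
      2 * h1 k (‖x‖ ^ 2) + 4 * (x i : ℂ) ^ 2 * h2 k (‖x‖ ^ 2) := by
  have hopen : IsOpen {y : E3 | y ≠ 0} := isOpen_compl_singleton
  have hmem : {y : E3 | y ≠ 0} ∈ nhds x := hopen.mem_nhds hx
  have heq : (fun y => pd i (gfun k) y) =ᶠ[nhds x] Pfun k i := by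
    filter_upwards [hmem] with y hy
    exact pd_g_eq k i hy
  rw [pd, heq.fderiv_eq, (P_hasFDerivAt k i hx).fderiv]
  simp [Li, ContinuousLinearMap.smulRight_apply, real_inner_comm,
    EuclideanSpace.inner_single_left, EuclideanSpace.inner_single_right]
  ring

theorem stmt10 (k : ℝ) :
    ContDiffOn ℝ (⊤ : ℕ∞) (gfun k) {x : E3 | x ≠ 0} ∧
    ∀ x : E3, x ≠ 0 → lap (gfun k) x + (k : ℂ) ^ 2 * gfun k x = 0 := by
  constructor
  · intro x hx
    apply ContDiffAt.contDiffWithinAt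
    have hn : ContDiffAt ℝ (⊤ : ℕ∞) (fun y : E3 => ‖y‖) x := contDiffAt_norm ℝ hx
    have hnC : ContDiffAt ℝ (⊤ : ℕ∞) (fun y : E3 => ((‖y‖ : ℝ) : ℂ)) x :=
      Complex.ofRealCLM.contDiff.contDiffAt.comp x hn
    have hexp : ContDiffAt ℝ (⊤ : ℕ∞)
        (fun y : E3 => Complex.exp (Complex.I * k * (‖y‖ : ℂ))) x :=
      Complex.contDiff_exp.contDiffAt.comp x (contDiffAt_const.mul hnC)
    have hden : ContDiffAt ℝ (⊤ : ℕ∞) (fun y : E3 => 4 * (Real.pi : ℂ) * (‖y‖ : ℂ)) x :=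
      contDiffAt_const.mul hnC
    have hne : 4 * (Real.pi : ℂ) * (‖x‖ : ℂ) ≠ 0 := by
      have : ‖x‖ ≠ 0 := norm_ne_zero_iff.2 hx
      simp [Real.pi_ne_zero, this]
    have : gfun k = fun y : E3 =>
        Complex.exp (Complex.I * k * (‖y‖ : ℂ)) * (4 * (Real.pi : ℂ) * (‖y‖ : ℂ))⁻¹ := by
      funext y; rw [gfun, div_eq_mul_inv]
    rw [this]
    exact hexp.mul (hden.inv hne)
  · intro x hx
    have hs : 0 < ‖x‖ ^ 2 := norm_sq_pos hx
    have hsumR : ‖x‖ ^ 2 = ∑ i : Fin 3, (x i) ^ 2 := by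
      rw [EuclideanSpace.norm_eq, Real.sq_sqrt (by positivity)]
      simp [Real.norm_eq_abs, sq_abs]
    have hsum : ∑ i : Fin 3, ((x i : ℂ)) ^ 2 = ((‖x‖ ^ 2 : ℝ) : ℂ) := by
      rw [hsumR]; push_cast; ring
    have hlap : lap (gfun k) x = 6 * h1 k (‖x‖ ^ 2) + 4 * ((‖x‖ ^ 2 : ℝ) : ℂ) * h2 k (‖x‖ ^ 2) := by
      rw [lap]
      have : ∀ i : Fin 3, pd i (fun y => pd i (gfun k) y) x =
          2 * h1 k (‖x‖ ^ 2) + 4 * (x i : ℂ) ^ 2 * h2 k (‖x‖ ^ 2) := fun i => pd_pd_g k i hx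
      rw [Finset.sum_congr rfl fun i _ => this i]
      have h4 : ∑ i : Fin 3, 4 * ((x i : ℂ)) ^ 2 * h2 k (‖x‖ ^ 2) =
          ((‖x‖ ^ 2 : ℝ) : ℂ) * (4 * h2 k (‖x‖ ^ 2)) := by
        rw [← hsum, Finset.sum_mul]
        exact Finset.sum_congr rfl fun i _ => by ring
      rw [Finset.sum_add_distrib, h4, Finset.sum_const]
      simp
      ring
    have hg : gfun k x = h0 k (‖x‖ ^ 2) := by rw [gfun_eq]
    rw [hlap, hg]
    have := key_alg k hs
    linear_combination this

end
end

section
/- Let k > 0, let g(x) = e^{i k |x|}/(4π |x|) for x ∈ ℝ³ \ {0}, and define the Maxwell Green tensor 𝐆 : ℝ³ \ {0} → ℂ^{3×3} by 𝐆(x) = i k g(x) I₃ + (i/k) (Hess g)(x), where I₃ is the 3×3 identity matrix and Hess g is the Hessian matrix of g. Then 𝐆 is smooth on ℝ³ \ {0}, and each column G_j of 𝐆 (j = 1, 2, 3) satisfies div G_j = 0 and ∇×(∇× G_j) − k² G_j = 0 on ℝ³ \ {0}. -/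
/-!
STATEMENT 12: The Maxwell Green tensor `𝐆(x) = ik g(x) I₃ + (i/k) Hess g(x)`,
with `g(x) = e^{ik|x|}/(4π|x|)`, is smooth on `ℝ³ \ {0}` and each column `G_j`
satisfies `div G_j = 0` and `∇×(∇×G_j) − k² G_j = 0` on `ℝ³ \ {0}`.
-/

noncomputable section

/-- The Hessian matrix `(Hess u)_{ij} = ∂ᵢ∂ⱼ u`. -/
def hess (u : E3 → ℂ) (x : E3) (i j : Fin 3) : ℂ := pd i (fun y => pd j u y) x

/-- Divergence of a vector field. -/
def dvg (u : E3 → Fin 3 → ℂ) (x : E3) : ℂ := ∑ i, pd i (fun y => u y i) x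

/-- Curl of a vector field: `∇×u = (∂₂u₃−∂₃u₂, ∂₃u₁−∂₁u₃, ∂₁u₂−∂₂u₁)`
(indices written 0,1,2). -/
def curl (u : E3 → Fin 3 → ℂ) (x : E3) : Fin 3 → ℂ :=
  ![pd 1 (fun y => u y 2) x - pd 2 (fun y => u y 1) x,
    pd 2 (fun y => u y 0) x - pd 0 (fun y => u y 2) x,
    pd 0 (fun y => u y 1) x - pd 1 (fun y => u y 0) x]

/-- The Maxwell Green tensor `𝐆(x) = ik g(x) I₃ + (i/k) Hess g(x)`. -/
def Gmat (k : ℝ) (x : E3) : Fin 3 → Fin 3 → ℂ := fun i j =>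
  Complex.I * (k : ℂ) * gfun k x * (if i = j then 1 else 0)
    + (Complex.I / (k : ℂ)) * hess (gfun k) x i j

/-- The `j`-th column of the Maxwell Green tensor, as a vector field. -/
def Gcol (k : ℝ) (j : Fin 3) : E3 → Fin 3 → ℂ := fun x i => Gmat k x i j

/-! ### Auxiliary development -/

section Aux

open Complex Real

/-! #### Radial functions and their derivatives -/

def Ek (k : ℝ) (t : ℝ) : ℂ := Complex.exp (Complex.I * (k:ℂ) * (t:ℂ))

def F0 (k : ℝ) (t : ℝ) : ℂ := Ek k t / (4 * (Real.pi:ℂ) * (t:ℂ))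

def F1 (k : ℝ) (t : ℝ) : ℂ :=
  (Complex.I * k * t - 1) * Ek k t / (4 * (Real.pi:ℂ) * (t:ℂ)^2)

def F2 (k : ℝ) (t : ℝ) : ℂ :=
  (-(k:ℂ)^2 * (t:ℂ)^2 - 2*Complex.I*k*t + 2) * Ek k t / (4 * (Real.pi:ℂ) * (t:ℂ)^3)

def Hc (k : ℝ) (t : ℝ) : ℂ := F1 k t / t

def H1 (k : ℝ) (t : ℝ) : ℂ := (F2 k t * t - F1 k t) / (t:ℂ)^2

lemma hasDerivAt_ofReal (t : ℝ) : HasDerivAt (fun s : ℝ => (s:ℂ)) 1 t := by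
  simpa using (hasDerivAt_id t).ofReal_comp

lemma hasDerivAt_Ek (k t : ℝ) : HasDerivAt (Ek k) (Complex.I * k * Ek k t) t := by
  have h1 : HasDerivAt (fun s : ℝ => Complex.I * k * (s:ℂ)) (Complex.I * k) t := by
    simpa using (hasDerivAt_ofReal t).const_mul (Complex.I * (k:ℂ))
  have h2 := h1.cexp
  have : (fun s : ℝ => Complex.exp (Complex.I * k * (s:ℂ))) = Ek k := rfl
  rw [this] at h2
  simpa [Ek, mul_comm] using h2

lemma pi_ne : ((Real.pi : ℂ)) ≠ 0 := by
  simp [Complex.ofReal_ne_zero, Real.pi_ne_zero]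

lemma hasDerivAt_F0 (k : ℝ) {t : ℝ} (ht : t ≠ 0) : HasDerivAt (F0 k) (F1 k t) t := by
  have htc : (t:ℂ) ≠ 0 := by simpa [Complex.ofReal_ne_zero] using ht
  have hE := hasDerivAt_Ek k t
  have hd : HasDerivAt (fun s : ℝ => 4 * (Real.pi:ℂ) * (s:ℂ)) (4 * (Real.pi:ℂ)) t := by
    simpa using (hasDerivAt_ofReal t).const_mul (4 * (Real.pi:ℂ))
  have hne : 4 * (Real.pi:ℂ) * (t:ℂ) ≠ 0 := by
    simp [pi_ne, htc, Real.pi_ne_zero]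
  have h := hE.div hd hne
  refine h.congr_deriv (Eq.symm ?_)
  rw [F1, div_eq_div_iff (by simp [pi_ne, htc, Real.pi_ne_zero]) (by simp [pi_ne, htc, Real.pi_ne_zero])]
  ring

lemma hasDerivAt_F1 (k : ℝ) {t : ℝ} (ht : t ≠ 0) : HasDerivAt (F1 k) (F2 k t) t := by
  have htc : (t:ℂ) ≠ 0 := by simpa [Complex.ofReal_ne_zero] using ht
  have hE := hasDerivAt_Ek k t
  have hnum : HasDerivAt (fun s : ℝ => (Complex.I * k * s - 1) * Ek k s)
      (-(k:ℂ)^2 * t * Ek k t) t := by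
    have h1 : HasDerivAt (fun s : ℝ => Complex.I * k * (s:ℂ) - 1) (Complex.I * k) t := by
      simpa using ((hasDerivAt_ofReal t).const_mul (Complex.I * (k:ℂ))).sub_const 1
    have h2 := h1.mul hE
    refine h2.congr_deriv (Eq.symm ?_)
    linear_combination (-(k:ℂ)^2 * t * Ek k t) * Complex.I_sq
  have hd : HasDerivAt (fun s : ℝ => 4 * (Real.pi:ℂ) * (s:ℂ)^2) (8 * (Real.pi:ℂ) * t) t := by
    have heq : (fun s : ℝ => 4 * (Real.pi:ℂ) * (s:ℂ)^2)
        = fun s : ℝ => 4 * (Real.pi:ℂ) * ((s:ℂ) * (s:ℂ)) := by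
      funext s; ring
    rw [heq]
    have h := ((hasDerivAt_ofReal t).mul (hasDerivAt_ofReal t)).const_mul (4 * (Real.pi:ℂ))
    refine h.congr_deriv (Eq.symm ?_)
    ring
  have hne : 4 * (Real.pi:ℂ) * (t:ℂ)^2 ≠ 0 := by simp [pi_ne, htc, Real.pi_ne_zero]
  have h := hnum.div hd hne
  refine h.congr_deriv (Eq.symm ?_)
  rw [F2, div_eq_div_iff (by simp [pi_ne, htc, Real.pi_ne_zero]) (by simp [pi_ne, htc, Real.pi_ne_zero])]
  ring

lemma hasDerivAt_Hc (k : ℝ) {t : ℝ} (ht : t ≠ 0) : HasDerivAt (Hc k) (H1 k t) t := by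
  have htc : (t:ℂ) ≠ 0 := by simpa [Complex.ofReal_ne_zero] using ht
  have h := (hasDerivAt_F1 k ht).div (hasDerivAt_ofReal t) htc
  refine h.congr_deriv (Eq.symm ?_)
  simp [H1]

lemma helmholtz_radial (k : ℝ) {t : ℝ} (ht : t ≠ 0) :
    3 * Hc k t + (t:ℂ) * H1 k t = -(k:ℂ)^2 * F0 k t := by
  have htc : (t:ℂ) ≠ 0 := by simpa [Complex.ofReal_ne_zero] using ht
  have hp := pi_ne
  rw [Hc, H1, F0, F1, F2]
  rw [div_div, div_mul_eq_mul_div, div_sub_div _ _ (by simp [htc, hp]) (by simp [htc, hp]),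
      div_div, ← mul_div_assoc, ← mul_div_assoc,
      div_add_div _ _ (by simp [htc, hp]) (by simp [htc, hp]), ← mul_div_assoc,
      div_eq_div_iff (by simp [htc, hp]) (by simp [htc, hp])]
  ring

/-! #### Derivatives of the norm and of `gfun` -/

lemma sum_mul_self_eq (y : E3) : (∑ i, y i * y i) = ‖y‖^2 := by
  rw [← real_inner_self_eq_norm_sq]
  simp only [PiLp.inner_apply, RCLike.inner_apply, conj_trivial]

lemma sqrt_sum_eq (y : E3) : Real.sqrt (∑ i, y i * y i) = ‖y‖ := by
  rw [sum_mul_self_eq, Real.sqrt_sq (norm_nonneg y)]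

lemma hasFDerivAt_norm3 {x : E3} (hx : x ≠ 0) :
    HasFDerivAt (fun y : E3 => ‖y‖) (‖x‖⁻¹ • innerSL ℝ x) x := by
  have hi : HasFDerivAt (fun y : E3 => (inner ℝ y y : ℝ))
      ((fderivInnerCLM ℝ (x, x)).comp
        ((ContinuousLinearMap.id ℝ E3).prod (ContinuousLinearMap.id ℝ E3))) x :=
    (hasFDerivAt_id x).inner ℝ (hasFDerivAt_id x)
  have hs : (inner ℝ x x : ℝ) ≠ 0 := by
    rw [real_inner_self_eq_norm_sq]
    exact pow_ne_zero 2 (norm_ne_zero_iff.2 hx)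
  have h := HasDerivAt.comp_hasFDerivAt_of_eq x (Real.hasDerivAt_sqrt hs) hi rfl
  have hfun : (Real.sqrt ∘ fun y : E3 => (inner ℝ y y : ℝ)) = fun y : E3 => ‖y‖ := by
    funext y
    simp only [Function.comp_apply, PiLp.inner_apply, RCLike.inner_apply, conj_trivial]
    exact sqrt_sum_eq y
  rw [hfun] at h
  refine h.congr_fderiv (Eq.symm ?_)
  ext v
  have hnorm : Real.sqrt (inner ℝ x x : ℝ) = ‖x‖ := by
    rw [real_inner_self_eq_norm_sq, Real.sqrt_sq (norm_nonneg x)]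
  simp only [ContinuousLinearMap.smul_apply, ContinuousLinearMap.coe_smul', Pi.smul_apply,
    innerSL_apply_apply, ContinuousLinearMap.coe_comp', Function.comp_apply,
    ContinuousLinearMap.prod_apply, ContinuousLinearMap.coe_id', id_eq, fderivInnerCLM_apply,
    hnorm]
  rw [real_inner_comm v x]
  rw [smul_eq_mul, smul_eq_mul]
  have : ‖x‖ ≠ 0 := norm_ne_zero_iff.2 hx
  field_simp
  ring

lemma hasFDerivAt_gfun (k : ℝ) {x : E3} (hx : x ≠ 0) :
    HasFDerivAt (gfun k)
      ((ContinuousLinearMap.smulRight (1 : ℝ →L[ℝ] ℝ) (F1 k ‖x‖)).comp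
        (‖x‖⁻¹ • innerSL ℝ x)) x := by
  have hn := hasFDerivAt_norm3 hx
  have hF := (hasDerivAt_F0 k (norm_ne_zero_iff.2 hx)).hasFDerivAt
  exact hF.comp x hn

lemma pd_gfun (k : ℝ) {x : E3} (hx : x ≠ 0) (j : Fin 3) :
    pd j (gfun k) x = ((x j : ℝ) : ℂ) * Hc k ‖x‖ := by
  have h := hasFDerivAt_gfun k hx
  rw [pd, h.fderiv]
  have hr : ‖x‖ ≠ 0 := norm_ne_zero_iff.2 hx
  simp only [ContinuousLinearMap.coe_comp', Function.comp_apply,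
    ContinuousLinearMap.coe_smul', Pi.smul_apply, innerSL_apply_apply,
    ContinuousLinearMap.smulRight_apply, ContinuousLinearMap.one_apply]
  rw [EuclideanSpace.inner_single_right]
  simp only [RCLike.inner_apply, conj_trivial, one_mul, smul_eq_mul, Hc]
  push_cast
  field_simp
  rw [Complex.real_smul, Complex.ofReal_div]
  ring

lemma pd_congr_ne {u v : E3 → ℂ} {x : E3} (hx : x ≠ 0)
    (h : ∀ y : E3, y ≠ 0 → u y = v y) (i : Fin 3) : pd i u x = pd i v x := by
  unfold pd
  congr 1
  apply Filter.EventuallyEq.fderiv_eq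
  filter_upwards [isOpen_ne.mem_nhds hx] with y hy using h y hy

def Pg (k : ℝ) (j : Fin 3) (y : E3) : ℂ := ((y j : ℝ) : ℂ) * Hc k ‖y‖

lemma hasFDerivAt_Pg (k : ℝ) (j : Fin 3) {x : E3} (hx : x ≠ 0) :
    HasFDerivAt (Pg k j)
      (((x j : ℝ):ℂ) • ((ContinuousLinearMap.smulRight (1 : ℝ →L[ℝ] ℝ) (H1 k ‖x‖)).comp
          (‖x‖⁻¹ • innerSL ℝ x))
       + (Hc k ‖x‖) • (Complex.ofRealCLM.comp (EuclideanSpace.proj j))) x := by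
  have hc : HasFDerivAt (fun y : E3 => ((y j : ℝ):ℂ))
      (Complex.ofRealCLM.comp (EuclideanSpace.proj j)) x :=
    (Complex.ofRealCLM.comp (EuclideanSpace.proj (𝕜 := ℝ) j)).hasFDerivAt
  have hd : HasFDerivAt (fun y : E3 => Hc k ‖y‖)
      ((ContinuousLinearMap.smulRight (1 : ℝ →L[ℝ] ℝ) (H1 k ‖x‖)).comp
        (‖x‖⁻¹ • innerSL ℝ x)) x :=
    ((hasDerivAt_Hc k (norm_ne_zero_iff.2 hx)).hasFDerivAt).comp x (hasFDerivAt_norm3 hx)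
  exact hc.mul hd

lemma pd_Pg (k : ℝ) (j : Fin 3) {x : E3} (hx : x ≠ 0) (i : Fin 3) :
    pd i (Pg k j) x
      = (if i = j then Hc k ‖x‖ else 0) + ((x i * x j / ‖x‖ : ℝ):ℂ) * H1 k ‖x‖ := by
  rw [pd, (hasFDerivAt_Pg k j hx).fderiv]
  have hr : ‖x‖ ≠ 0 := norm_ne_zero_iff.2 hx
  simp only [ContinuousLinearMap.add_apply, ContinuousLinearMap.coe_smul', Pi.smul_apply,
    ContinuousLinearMap.coe_comp', Function.comp_apply, ContinuousLinearMap.smulRight_apply,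
    ContinuousLinearMap.one_apply, innerSL_apply_apply, Complex.ofRealCLM_apply]
  rw [EuclideanSpace.inner_single_right]
  rw [show (EuclideanSpace.proj (𝕜 := ℝ) j) (EuclideanSpace.single i (1:ℝ))
      = (EuclideanSpace.single i (1:ℝ)) j from rfl, EuclideanSpace.single_apply]
  simp only [conj_trivial, one_mul, smul_eq_mul, Complex.real_smul, Complex.ofReal_mul,
    Complex.ofReal_inv, Complex.ofReal_div]
  have hrc : ((‖x‖:ℝ):ℂ) ≠ 0 := by exact_mod_cast hr
  by_cases hij : i = j
  · subst hij
    simp only [if_pos rfl]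
    field_simp
    simp only [if_true, Complex.ofReal_one, mul_one]
    ring
  · have hji : ¬(j = i) := fun h => hij h.symm
    simp only [if_neg hij, if_neg hji]
    push_cast
    field_simp
    ring

lemma pd_pd_gfun (k : ℝ) {x : E3} (hx : x ≠ 0) (i j : Fin 3) :
    pd i (pd j (gfun k)) x
      = (if i = j then Hc k ‖x‖ else 0) + ((x i * x j / ‖x‖ : ℝ):ℂ) * H1 k ‖x‖ := by
  have h1 : pd i (pd j (gfun k)) x = pd i (Pg k j) x :=
    pd_congr_ne hx (fun y hy => pd_gfun k hy j) i
  rw [h1, pd_Pg k j hx i]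

lemma lap_gfun (k : ℝ) {x : E3} (hx : x ≠ 0) :
    ∑ m, pd m (pd m (gfun k)) x = -(k:ℂ)^2 * gfun k x := by
  have h := fun m => pd_pd_gfun k hx m m
  rw [Fin.sum_univ_three, h 0, h 1, h 2]
  simp only [if_pos rfl]
  have hr : ‖x‖ ≠ 0 := norm_ne_zero_iff.2 hx
  have hrc : ((‖x‖:ℝ):ℂ) ≠ 0 := by exact_mod_cast hr
  have hsum : (x 0 * x 0 + x 1 * x 1 + x 2 * x 2 : ℝ) = ‖x‖^2 := by
    have h2 := sum_mul_self_eq x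
    rwa [Fin.sum_univ_three] at h2
  have hsumc : ((x 0:ℝ):ℂ) * (x 0:ℝ) + ((x 1:ℝ):ℂ) * (x 1:ℝ) + ((x 2:ℝ):ℂ) * (x 2:ℝ)
      = ((‖x‖:ℝ):ℂ)^2 := by exact_mod_cast congrArg Complex.ofReal hsum
  have hg : gfun k x = F0 k ‖x‖ := rfl
  rw [hg, ← helmholtz_radial k hr]
  push_cast
  field_simp
  linear_combination H1 k ‖x‖ * hsumc

/-! #### Toolkit for `pd` on the open set `{x ≠ 0}` -/

def UU : Set E3 := {x : E3 | x ≠ 0}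

lemma isOpen_UU : IsOpen UU := isOpen_ne

lemma diffAt_of_cd {u : E3 → ℂ} {x : E3} (hu : ContDiffOn ℝ (⊤ : ℕ∞) u UU) (hx : x ≠ 0) :
    DifferentiableAt ℝ u x :=
  (hu.contDiffAt (isOpen_UU.mem_nhds hx)).differentiableAt (by simp)

lemma contDiffOn_pd {u : E3 → ℂ} (hu : ContDiffOn ℝ (⊤ : ℕ∞) u UU) (i : Fin 3) :
    ContDiffOn ℝ (⊤ : ℕ∞) (pd i u) UU := by
  have h := hu.fderiv_of_isOpen (m := (⊤ : ℕ∞)) isOpen_UU (by simp)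
  exact (ContinuousLinearMap.apply ℝ ℂ (EuclideanSpace.single i 1)).contDiff.comp_contDiffOn h

lemma contDiffOn_gfun (k : ℝ) : ContDiffOn ℝ (⊤ : ℕ∞) (gfun k) UU := by
  have hn : ContDiffOn ℝ (⊤ : ℕ∞) (fun y : E3 => ‖y‖) UU := fun x hx =>
    (contDiffAt_norm ℝ hx).contDiffWithinAt
  have hcast : ContDiffOn ℝ (⊤ : ℕ∞) (fun y : E3 => ((‖y‖:ℝ):ℂ)) UU :=
    Complex.ofRealCLM.contDiff.comp_contDiffOn hn
  have hnum : ContDiffOn ℝ (⊤ : ℕ∞) (fun y : E3 => Complex.exp (Complex.I * k * ‖y‖)) UU := by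
    apply Complex.contDiff_exp.comp_contDiffOn
    exact contDiffOn_const.mul hcast
  have hden : ContDiffOn ℝ (⊤ : ℕ∞) (fun y : E3 => 4 * (Real.pi:ℂ) * ((‖y‖:ℝ):ℂ)) UU :=
    contDiffOn_const.mul hcast
  have hne : ∀ x, x ∈ UU → (4 * (Real.pi:ℂ) * ((‖x‖:ℝ):ℂ)) ≠ 0 := by
    intro x hx
    have h1 : (‖x‖:ℝ) ≠ 0 := norm_ne_zero_iff.2 hx
    simp [Real.pi_ne_zero, h1]
  have hinv : ContDiffOn ℝ (⊤ : ℕ∞) (fun y : E3 => (4 * (Real.pi:ℂ) * ((‖y‖:ℝ):ℂ))⁻¹) UU := by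
    intro x hx
    have h2 : ContDiffAt ℝ (⊤ : ℕ∞) (Inv.inv : ℂ → ℂ) (4 * (Real.pi:ℂ) * ((‖x‖:ℝ):ℂ)) :=
      (contDiffAt_inv ℂ (hne x hx)).restrict_scalars ℝ
    exact h2.comp_contDiffWithinAt x (hden x hx)
  have hq := hnum.mul hinv
  exact ContDiffOn.congr hq (fun y _ => by rw [gfun, div_eq_mul_inv])

lemma pd_swap {u : E3 → ℂ} (hu : ContDiffOn ℝ (⊤ : ℕ∞) u UU) {x : E3} (hx : x ≠ 0) (i j : Fin 3) :
    pd i (pd j u) x = pd j (pd i u) x := by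
  have hx' := isOpen_UU.mem_nhds hx
  have hd : DifferentiableAt ℝ (fderiv ℝ u) x :=
    ((hu.fderiv_of_isOpen (m := (⊤ : ℕ∞)) isOpen_UU (by simp)).contDiffAt hx').differentiableAt (by simp)
  have key : ∀ a b : Fin 3, pd a (pd b u) x
      = fderiv ℝ (fderiv ℝ u) x (EuclideanSpace.single a 1) (EuclideanSpace.single b 1) := by
    intro a b
    have h1 : pd b u = (ContinuousLinearMap.apply ℝ ℂ (EuclideanSpace.single b 1))
        ∘ (fderiv ℝ u) := rfl
    rw [pd, h1, fderiv_comp x (ContinuousLinearMap.differentiableAt _) hd,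
      ContinuousLinearMap.fderiv]
    rfl
  have hsym := (hu.contDiffAt hx').isSymmSndFDerivAt (by rw [minSmoothness_of_isRCLikeNormedField]; exact WithTop.coe_le_coe.2 le_top)
  rw [key i j, key j i, hsym]

lemma pd_add {u v : E3 → ℂ} {x : E3} (hu : DifferentiableAt ℝ u x)
    (hv : DifferentiableAt ℝ v x) (i : Fin 3) :
    pd i (fun y => u y + v y) x = pd i u x + pd i v x := by
  unfold pd
  rw [fderiv_fun_add hu hv]
  rfl

lemma pd_sub {u v : E3 → ℂ} {x : E3} (hu : DifferentiableAt ℝ u x)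
    (hv : DifferentiableAt ℝ v x) (i : Fin 3) :
    pd i (fun y => u y - v y) x = pd i u x - pd i v x := by
  unfold pd
  rw [fderiv_fun_sub hu hv]
  rfl

lemma pd_const_mul {u : E3 → ℂ} {x : E3} (hu : DifferentiableAt ℝ u x) (c : ℂ) (i : Fin 3) :
    pd i (fun y => c * u y) x = c * pd i u x := by
  unfold pd
  rw [fderiv_const_mul hu c]
  simp

lemma pd_zero (i : Fin 3) (x : E3) : pd i (fun _ => (0:ℂ)) x = 0 := by
  unfold pd
  rw [fderiv_fun_const]
  simp

lemma pd_sum {u : Fin 3 → E3 → ℂ} {x : E3} (h : ∀ m, DifferentiableAt ℝ (u m) x) (i : Fin 3) :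
    pd i (fun y => ∑ m, u m y) x = ∑ m, pd i (u m) x := by
  unfold pd
  rw [fderiv_fun_sum (fun m _ => h m)]
  simp

/-! #### The Green tensor components -/

lemma hGmat_eq (k : ℝ) (c j : Fin 3) (y : E3) :
    Gmat k y c j = (Complex.I * k * (if c = j then 1 else 0)) * gfun k y
      + (Complex.I / k) * pd c (pd j (gfun k)) y := by
  simp only [Gmat, hess]
  ring

lemma contDiffOn_G (k : ℝ) (c j : Fin 3) : ContDiffOn ℝ (⊤ : ℕ∞) (fun y => Gmat k y c j) UU :=
  ContDiffOn.congr
    ((contDiffOn_const.mul (contDiffOn_gfun k)).add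
      (contDiffOn_const.mul (contDiffOn_pd (contDiffOn_pd (contDiffOn_gfun k) j) c)))
    (fun y _ => hGmat_eq k c j y)

lemma pd_G_eq (k : ℝ) (c j m : Fin 3) {y : E3} (hy : y ≠ 0) :
    pd m (fun z => Gmat k z c j) y
      = (Complex.I * k * (if c = j then 1 else 0)) * pd m (gfun k) y
        + (Complex.I / k) * pd m (pd c (pd j (gfun k))) y := by
  have hg := contDiffOn_gfun k
  have hw := contDiffOn_pd (contDiffOn_pd hg j) c
  have d1 : DifferentiableAt ℝ
      (fun z => (Complex.I * k * (if c = j then 1 else 0)) * gfun k z) y :=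
    (diffAt_of_cd hg hy).const_mul _
  have d2 : DifferentiableAt ℝ (fun z => (Complex.I / k) * pd c (pd j (gfun k)) z) y :=
    (diffAt_of_cd hw hy).const_mul _
  rw [pd_congr_ne hy (fun z _ => hGmat_eq k c j z) m, pd_add d1 d2 m,
    pd_const_mul (diffAt_of_cd hg hy) _ m, pd_const_mul (diffAt_of_cd hw hy) _ m]

/-! #### Laplacian commutation -/

lemma lap_pd_comm {u : E3 → ℂ} (hu : ContDiffOn ℝ (⊤ : ℕ∞) u UU) {x : E3} (hx : x ≠ 0) (c : Fin 3) :
    ∑ m, pd m (pd m (pd c u)) x = pd c (fun y => ∑ m, pd m (pd m u) y) x := by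
  have hpd : ∀ m : Fin 3, ContDiffOn ℝ (⊤ : ℕ∞) (pd m u) UU := fun m => contDiffOn_pd hu m
  have step : ∀ m : Fin 3, pd m (pd m (pd c u)) x = pd c (pd m (pd m u)) x := by
    intro m
    have h1 : pd m (pd m (pd c u)) x = pd m (pd c (pd m u)) x :=
      pd_congr_ne hx (fun y hy => pd_swap hu hy m c) m
    rw [h1, pd_swap (hpd m) hx m c]
  have hd : ∀ m : Fin 3, DifferentiableAt ℝ (pd m (pd m u)) x :=
    fun m => diffAt_of_cd (contDiffOn_pd (hpd m) m) hx
  rw [pd_sum hd c, Fin.sum_univ_three, Fin.sum_univ_three, step 0, step 1, step 2]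

lemma lap_pd_eq (k : ℝ) {u : E3 → ℂ} (hu : ContDiffOn ℝ (⊤ : ℕ∞) u UU)
    (hlap : ∀ y : E3, y ≠ 0 → ∑ m, pd m (pd m u) y = -(k:ℂ)^2 * u y)
    {x : E3} (hx : x ≠ 0) (c : Fin 3) :
    ∑ m, pd m (pd m (pd c u)) x = -(k:ℂ)^2 * pd c u x := by
  rw [lap_pd_comm hu hx c, pd_congr_ne hx (fun y hy => hlap y hy) c,
    pd_const_mul (diffAt_of_cd hu hx) _ c]

lemma lap_pdj (k : ℝ) (j : Fin 3) {x : E3} (hx : x ≠ 0) :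
    ∑ m, pd m (pd m (pd j (gfun k))) x = -(k:ℂ)^2 * pd j (gfun k) x :=
  lap_pd_eq k (contDiffOn_gfun k) (fun y hy => lap_gfun k hy) hx j

lemma lap_pdcj (k : ℝ) (c j : Fin 3) {x : E3} (hx : x ≠ 0) :
    ∑ m, pd m (pd m (pd c (pd j (gfun k)))) x = -(k:ℂ)^2 * pd c (pd j (gfun k)) x :=
  lap_pd_eq k (contDiffOn_pd (contDiffOn_gfun k) j) (fun y hy => lap_pdj k j hy) hx c

lemma lap_G (k : ℝ) (c j : Fin 3) {x : E3} (hx : x ≠ 0) :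
    ∑ m, pd m (pd m (fun y => Gmat k y c j)) x = -(k:ℂ)^2 * Gmat k x c j := by
  have hg := contDiffOn_gfun k
  have hw := contDiffOn_pd (contDiffOn_pd hg j) c
  have key : ∀ m : Fin 3, pd m (pd m (fun y => Gmat k y c j)) x
      = (Complex.I * k * (if c = j then 1 else 0)) * pd m (pd m (gfun k)) x
        + (Complex.I / k) * pd m (pd m (pd c (pd j (gfun k)))) x := by
    intro m
    have d1 : DifferentiableAt ℝ
        (fun z => (Complex.I * k * (if c = j then 1 else 0)) * pd m (gfun k) z) x :=
      (diffAt_of_cd (contDiffOn_pd hg m) hx).const_mul _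
    have d2 : DifferentiableAt ℝ
        (fun z => (Complex.I / k) * pd m (pd c (pd j (gfun k))) z) x :=
      (diffAt_of_cd (contDiffOn_pd hw m) hx).const_mul _
    rw [pd_congr_ne hx (fun z hz => pd_G_eq k c j m hz) m, pd_add d1 d2 m,
      pd_const_mul (diffAt_of_cd (contDiffOn_pd hg m) hx) _ m,
      pd_const_mul (diffAt_of_cd (contDiffOn_pd hw m) hx) _ m]
  rw [Fin.sum_univ_three, key 0, key 1, key 2, hGmat_eq k c j x]
  have h1 := lap_gfun k hx
  have h2 := lap_pdcj k c j hx
  rw [Fin.sum_univ_three] at h1 h2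
  linear_combination (Complex.I * k * (if c = j then 1 else 0)) * h1 + (Complex.I / k) * h2

/-! #### Divergence-free -/

lemma div_G (k : ℝ) (hk0 : (k:ℂ) ≠ 0) (j : Fin 3) {x : E3} (hx : x ≠ 0) :
    dvg (Gcol k j) x = 0 := by
  have key : ∀ i : Fin 3, pd i (fun y => Gcol k j y i) x
      = (Complex.I * k * (if i = j then 1 else 0)) * pd i (gfun k) x
        + (Complex.I / k) * pd i (pd i (pd j (gfun k))) x := fun i => pd_G_eq k i j i hx
  have hite : ∑ i : Fin 3, (Complex.I * k * if i = j then 1 else 0) * pd i (gfun k) x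
      = Complex.I * k * pd j (gfun k) x := by
    have h1 : ∀ i : Fin 3, (Complex.I * (k:ℂ) * if i = j then 1 else 0) * pd i (gfun k) x
        = if i = j then Complex.I * (k:ℂ) * pd i (gfun k) x else 0 := by
      intro i; split <;> simp
    rw [Finset.sum_congr rfl (fun i _ => h1 i), Finset.sum_ite_eq' Finset.univ j _]
    simp
  have hlap := lap_pdj k j hx
  have hkk := mul_inv_cancel₀ hk0
  rw [dvg, Finset.sum_congr rfl (fun i _ => key i), Finset.sum_add_distrib, hite,
    ← Finset.mul_sum, hlap]
  linear_combination (-(Complex.I) * k * (pd j (gfun k) x)) * hkk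

/-! #### Curl-curl identity -/

lemma cc_comp {f g h : E3 → ℂ} (hf : ContDiffOn ℝ (⊤ : ℕ∞) f UU) (hg : ContDiffOn ℝ (⊤ : ℕ∞) g UU)
    (hh : ContDiffOn ℝ (⊤ : ℕ∞) h UU) {x : E3} (hx : x ≠ 0) (a b c : Fin 3) :
    pd b (fun y => pd a g y - pd b f y) x - pd c (fun y => pd c f y - pd a h y) x
      = pd a (fun y => pd a f y + pd b g y + pd c h y) x
        - (pd a (pd a f) x + pd b (pd b f) x + pd c (pd c f) x) := by
  have dmm : ∀ (u : E3 → ℂ), ContDiffOn ℝ (⊤ : ℕ∞) u UU → ∀ m : Fin 3, DifferentiableAt ℝ (pd m u) x :=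
    fun u hu m => diffAt_of_cd (contDiffOn_pd hu m) hx
  rw [pd_sub (dmm g hg a) (dmm f hf b) b, pd_sub (dmm f hf c) (dmm h hh a) c]
  have e1 : pd a (fun y => pd a f y + pd b g y + pd c h y) x
      = pd a (pd a f) x + pd a (pd b g) x + pd a (pd c h) x := by
    rw [pd_add (u := fun y => pd a f y + pd b g y) ((dmm f hf a).add (dmm g hg b)) (dmm h hh c) a,
        pd_add (dmm f hf a) (dmm g hg b) a]
  rw [e1, pd_swap hg hx b a, pd_swap hh hx c a]
  ring

lemma cc_G (k : ℝ) (j a b c : Fin 3) {x : E3} (hx : x ≠ 0)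
    (hdiv0 : ∀ y : E3, y ≠ 0 →
      pd a (fun z => Gmat k z a j) y + pd b (fun z => Gmat k z b j) y
        + pd c (fun z => Gmat k z c j) y = 0)
    (hlapf : pd a (pd a (fun z => Gmat k z a j)) x + pd b (pd b (fun z => Gmat k z a j)) x
        + pd c (pd c (fun z => Gmat k z a j)) x = -(k:ℂ)^2 * Gmat k x a j) :
    pd b (fun y => pd a (fun z => Gmat k z b j) y - pd b (fun z => Gmat k z a j) y) x
      - pd c (fun y => pd c (fun z => Gmat k z a j) y - pd a (fun z => Gmat k z c j) y) x
      = (k:ℂ)^2 * Gmat k x a j := by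
  rw [cc_comp (contDiffOn_G k a j) (contDiffOn_G k b j) (contDiffOn_G k c j) hx a b c]
  have hzero : pd a (fun y => pd a (fun z => Gmat k z a j) y + pd b (fun z => Gmat k z b j) y
      + pd c (fun z => Gmat k z c j) y) x = 0 := by
    rw [pd_congr_ne hx (fun y hy => hdiv0 y hy) a, pd_zero]
  rw [hzero, hlapf]
  ring

end Aux

theorem stmt12 (k : ℝ) (hk : 0 < k) :
    (∀ i j : Fin 3, ContDiffOn ℝ (⊤ : ℕ∞) (fun x => Gmat k x i j) {x : E3 | x ≠ 0}) ∧
    ∀ j : Fin 3, ∀ x : E3, x ≠ 0 →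
      dvg (Gcol k j) x = 0 ∧
      curl (fun y => curl (Gcol k j) y) x - (k : ℂ) ^ 2 • Gcol k j x = 0 := by
  have hk0 : (k:ℂ) ≠ 0 := by
    simp [Complex.ofReal_ne_zero, hk.ne']
  constructor
  · intro i j
    exact contDiffOn_G k i j
  · intro j x hx
    refine ⟨div_G k hk0 j hx, ?_⟩
    have hcurl0 : (fun y => curl (Gcol k j) y 0)
        = fun y => pd 1 (fun z => Gmat k z 2 j) y - pd 2 (fun z => Gmat k z 1 j) y := by
      funext y; simp [curl, Gcol]
    have hcurl1 : (fun y => curl (Gcol k j) y 1)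
        = fun y => pd 2 (fun z => Gmat k z 0 j) y - pd 0 (fun z => Gmat k z 2 j) y := by
      funext y; simp [curl, Gcol]
    have hcurl2 : (fun y => curl (Gcol k j) y 2)
        = fun y => pd 0 (fun z => Gmat k z 1 j) y - pd 1 (fun z => Gmat k z 0 j) y := by
      funext y; simp [curl, Gcol]
    have hdiv3 : ∀ y : E3, y ≠ 0 →
        pd 0 (fun z => Gmat k z 0 j) y + pd 1 (fun z => Gmat k z 1 j) y
          + pd 2 (fun z => Gmat k z 2 j) y = 0 := by
      intro y hy
      have hh := div_G k hk0 j hy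
      rw [dvg, Fin.sum_univ_three] at hh
      exact hh
    have hlapf : ∀ a : Fin 3,
        pd 0 (pd 0 (fun z => Gmat k z a j)) x + pd 1 (pd 1 (fun z => Gmat k z a j)) x
          + pd 2 (pd 2 (fun z => Gmat k z a j)) x = -(k:ℂ)^2 * Gmat k x a j := by
      intro a
      have hh := lap_G k a j hx
      rwa [Fin.sum_univ_three] at hh
    have comp0 := cc_G k j 0 1 2 hx (fun y hy => hdiv3 y hy) (hlapf 0)
    have comp1 := cc_G k j 1 2 0 hx (fun y hy => by linear_combination hdiv3 y hy)
      (by linear_combination hlapf 1)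
    have comp2 := cc_G k j 2 0 1 hx (fun y hy => by linear_combination hdiv3 y hy)
      (by linear_combination hlapf 2)
    funext c
    simp only [Pi.sub_apply, Pi.smul_apply, Pi.zero_apply, smul_eq_mul]
    rw [sub_eq_zero]
    fin_cases c
    · show curl (fun y => curl (Gcol k j) y) x 0 = (k:ℂ)^2 * Gcol k j x 0
      rw [show (curl (fun y => curl (Gcol k j) y) x 0)
          = pd 1 (fun y => curl (Gcol k j) y 2) x - pd 2 (fun y => curl (Gcol k j) y 1) x
          from by simp [curl], hcurl2, hcurl1]
      exact comp0
    · show curl (fun y => curl (Gcol k j) y) x 1 = (k:ℂ)^2 * Gcol k j x 1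
      rw [show (curl (fun y => curl (Gcol k j) y) x 1)
          = pd 2 (fun y => curl (Gcol k j) y 0) x - pd 0 (fun y => curl (Gcol k j) y 2) x
          from by simp [curl], hcurl0, hcurl2]
      exact comp1
    · show curl (fun y => curl (Gcol k j) y) x 2 = (k:ℂ)^2 * Gcol k j x 2
      rw [show (curl (fun y => curl (Gcol k j) y) x 2)
          = pd 0 (fun y => curl (Gcol k j) y 1) x - pd 1 (fun y => curl (Gcol k j) y 0) x
          from by simp [curl], hcurl1, hcurl0]
      exact comp2

end
end
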